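/- arXiv:1402.7156 — 2 statements merged into one kernel-verified Lean document; each statement's English description precedes it below -/
import Mathlib

section
/- The vector π defined by π(x) = (1−r)/Z for 1 ≤ x ≤ n₀ and π(x) = 1/Z for n₀ < x ≤ n, where Z = (1−r)n₀ + n₁, is a probability distribution on {1,…,n} (its entries are nonnegative and sum to 1) and is stationary for the closed-pore random walk: πP = π. -/
/-- The staying probability `r(x)`: `0` in the high-diffusivity region `H₀`
(sites with 0-based index `< n₀`), `r` in the low-diffusivity region `H₁`. -/
def rFun (n₀ : ℕ) (r : ℝ) (x : ℕ) : ℝ := if x < n₀ then 0 else r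

/-- The transition matrix of the closed-pore random walk on states `{1,…,n}`,
`n = n₀ + n₁`, encoded 0-based on `Fin (n₀ + n₁)`: nearest-neighbour jumps with
probability `(1 − r(x))/2`, `P(1,1) = 1/2`, `P(x,x) = r(x)` at interior sites,
`P(n,n) = (1+r)/2`, all other entries `0`. -/
noncomputable def closedP (n₀ n₁ : ℕ) (r : ℝ) : Matrix (Fin (n₀ + n₁)) (Fin (n₀ + n₁)) ℝ :=
  fun x y =>
    if (y : ℕ) = (x : ℕ) + 1 then (1 - rFun n₀ r x) / 2
    else if (y : ℕ) + 1 = (x : ℕ) then (1 - rFun n₀ r x) / 2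
    else if y = x then
      (if (x : ℕ) = 0 then 1 / 2
       else if (x : ℕ) = n₀ + n₁ - 1 then (1 + r) / 2
       else rFun n₀ r x)
    else 0

/-- The closed-pore stationary state: `π(x) = (1−r)/Z` on `H₀`, `π(x) = 1/Z` on `H₁`,
with `Z = (1−r)n₀ + n₁`. -/
noncomputable def statPi (n₀ n₁ : ℕ) (r : ℝ) : Fin (n₀ + n₁) → ℝ :=
  fun x =>
    if (x : ℕ) < n₀ then (1 - r) / ((1 - r) * n₀ + n₁)
    else 1 / ((1 - r) * n₀ + n₁)

lemma key (n₀ n₁ : ℕ) (r : ℝ) (x : Fin (n₀ + n₁)) :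
    statPi n₀ n₁ r x * (1 - rFun n₀ r x) = (1 - r) / ((1 - r) * n₀ + n₁) := by
  unfold statPi rFun
  split_ifs with h
  · ring
  · ring

lemma rev (n₀ n₁ : ℕ) (r : ℝ) (x y : Fin (n₀ + n₁)) :
    statPi n₀ n₁ r x * closedP n₀ n₁ r x y = statPi n₀ n₁ r y * closedP n₀ n₁ r y x := by
  by_cases h3 : y = x
  · subst h3; rfl
  · have h3' : ¬ (y : ℕ) = (x : ℕ) := fun h => h3 (Fin.ext h)
    have key2 : ∀ z : Fin (n₀ + n₁), statPi n₀ n₁ r z * ((1 - rFun n₀ r z) / 2)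
        = (1 - r) / ((1 - r) * n₀ + n₁) / 2 := by
      intro z; unfold statPi rFun; split_ifs <;> ring
    unfold closedP
    simp only [Fin.ext_iff]
    split_ifs <;>
      first
      | (exfalso; omega)
      | (rw [key2, key2])
      | (rw [mul_zero, mul_zero])

lemma rowsum (n₀ n₁ : ℕ) (h₀ : 1 ≤ n₀) (h₁ : 1 ≤ n₁) (r : ℝ) (x : Fin (n₀ + n₁)) :
    ∑ y, closedP n₀ n₁ r x y = 1 := by
  set D : ℝ := (if (x : ℕ) = 0 then 1 / 2
       else if (x : ℕ) = n₀ + n₁ - 1 then (1 + r) / 2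
       else rFun n₀ r x) with hD
  have hsplit : ∀ y : Fin (n₀ + n₁), closedP n₀ n₁ r x y =
      (if (y : ℕ) = (x : ℕ) + 1 then (1 - rFun n₀ r x) / 2 else 0)
      + (if (y : ℕ) + 1 = (x : ℕ) then (1 - rFun n₀ r x) / 2 else 0)
      + (if (y : ℕ) = (x : ℕ) then D else 0) := by
    intro y
    unfold closedP
    rw [← hD]
    simp only [Fin.ext_iff]
    split_ifs <;> first | ring1 | (exfalso; omega)
  rw [Finset.sum_congr rfl (fun y _ => hsplit y), Finset.sum_add_distrib,
    Finset.sum_add_distrib]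
  have e1 : ∀ (a : ℕ) (c : ℝ), (∑ y : Fin (n₀ + n₁), if (y : ℕ) = a then c else 0)
      = if a ∈ Finset.range (n₀ + n₁) then c else 0 := by
    intro a c
    rw [Fin.sum_univ_eq_sum_range (fun k => if k = a then c else 0)]
    exact Finset.sum_ite_eq' _ _ _
  have e2 : (∑ y : Fin (n₀ + n₁), if (y : ℕ) + 1 = (x : ℕ) then (1 - rFun n₀ r x) / 2 else 0)
      = if (x : ℕ) = 0 then 0 else (1 - rFun n₀ r x) / 2 := by
    by_cases hx : (x : ℕ) = 0
    · rw [if_pos hx]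
      apply Finset.sum_eq_zero
      intro y _
      rw [if_neg (by omega)]
    · rw [if_neg hx]
      have : ∀ y : Fin (n₀ + n₁), ((y : ℕ) + 1 = (x : ℕ)) = ((y : ℕ) = (x : ℕ) - 1) := by
        intro y; apply propext; omega
      simp only [this]
      rw [e1]
      rw [if_pos (Finset.mem_range.mpr (by omega))]
  rw [e2, e1, e1, if_pos (Finset.mem_range.mpr x.isLt)]
  have hn : 2 ≤ n₀ + n₁ := by omega
  by_cases hx0 : (x : ℕ) = 0
  · rw [if_pos (Finset.mem_range.mpr (by omega)), if_pos hx0, hD, if_pos hx0]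
    have : rFun n₀ r (x : ℕ) = 0 := by unfold rFun; rw [if_pos (by omega)]
    rw [this]; ring
  · by_cases hxl : (x : ℕ) = n₀ + n₁ - 1
    · rw [if_neg (by simp [Finset.mem_range]; omega), if_neg hx0, hD, if_neg hx0, if_pos hxl]
      have : rFun n₀ r (x : ℕ) = r := by unfold rFun; rw [if_neg (by omega)]
      rw [this]; ring
    · rw [if_pos (Finset.mem_range.mpr (by omega)), if_neg hx0, hD, if_neg hx0, if_neg hxl]
      ring

/-- `π` is a probability distribution on `{1,…,n}` and is stationary
for the closed-pore random walk: `πP = π`. -/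
theorem stmt8 (n₀ n₁ : ℕ) (h₀ : 1 ≤ n₀) (h₁ : 1 ≤ n₁) (r : ℝ)
    (hr : r ∈ Set.Ico (0 : ℝ) 1) :
    (∀ x, 0 ≤ statPi n₀ n₁ r x) ∧
    (∑ x, statPi n₀ n₁ r x = 1) ∧
    Matrix.vecMul (statPi n₀ n₁ r) (closedP n₀ n₁ r) = statPi n₀ n₁ r := by
  obtain ⟨hr0, hr1⟩ := hr
  have hn1 : (1 : ℝ) ≤ (n₁ : ℝ) := by exact_mod_cast h₁
  have hZ : (0 : ℝ) < (1 - r) * n₀ + n₁ := by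
    have : (0 : ℝ) ≤ (1 - r) * n₀ := mul_nonneg (by linarith) (Nat.cast_nonneg _)
    linarith
  refine ⟨?_, ?_, ?_⟩
  · intro x
    unfold statPi
    split_ifs
    · exact div_nonneg (by linarith) hZ.le
    · exact div_nonneg zero_le_one hZ.le
  · have h : ∑ x : Fin (n₀ + n₁), statPi n₀ n₁ r x
        = ∑ k ∈ Finset.range (n₀ + n₁),
          (if k < n₀ then (1 - r) / ((1 - r) * n₀ + n₁) else 1 / ((1 - r) * n₀ + n₁)) := by
      unfold statPi
      exact Fin.sum_univ_eq_sum_range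
        (fun k => if k < n₀ then (1 - r) / ((1 - r) * n₀ + n₁) else 1 / ((1 - r) * n₀ + n₁))
        (n₀ + n₁)
    rw [h, Finset.range_eq_Ico,
      ← Finset.sum_Ico_consecutive _ (Nat.zero_le n₀) (Nat.le_add_right n₀ n₁)]
    rw [Finset.sum_congr rfl (fun k hk => if_pos (Finset.mem_Ico.mp hk).2),
      Finset.sum_congr rfl (fun k hk => if_neg (by
        have := (Finset.mem_Ico.mp hk).1; omega)),
      Finset.sum_const, Finset.sum_const, Nat.card_Ico, Nat.card_Ico]
    simp only [Nat.sub_zero, Nat.add_sub_cancel_left, nsmul_eq_mul]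
    field_simp
  · funext y
    have hv : Matrix.vecMul (statPi n₀ n₁ r) (closedP n₀ n₁ r) y
        = ∑ x, statPi n₀ n₁ r x * closedP n₀ n₁ r x y := rfl
    rw [hv, Finset.sum_congr rfl (fun x _ => rev n₀ n₁ r x y), ← Finset.mul_sum,
      rowsum n₀ n₁ h₀ h₁ r y, mul_one]
end

section
/- The closed-pore random walk admits a unique stationary distribution: if μ is any probability vector on {1,…,n} with μP = μ, then μ = π, where π(x) = (1−r)/Z for 1 ≤ x ≤ n₀ and π(x) = 1/Z for n₀ < x ≤ n, with Z = (1−r)n₀ + n₁. -/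
lemma fin_sum_ite {n : ℕ} (g : Fin n → ℝ) (c : ℕ) :
    (∑ x : Fin n, if (x:ℕ) = c then g x else 0) = if h : c < n then g ⟨c,h⟩ else 0 := by
  split_ifs with h
  · rw [show (∑ x : Fin n, if (x:ℕ) = c then g x else 0)
        = ∑ x : Fin n, if x = (⟨c,h⟩:Fin n) then g x else 0 from
      Finset.sum_congr rfl (fun x _ => by simp [Fin.ext_iff])]
    simp
  · apply Finset.sum_eq_zero; intro x _
    rw [if_neg]; have := x.isLt; omega

lemma tri_sum {n : ℕ} (g : Fin n → ℝ) (y : Fin n)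
    (h0 : ∀ x : Fin n, (x:ℕ) ≠ (y:ℕ) → (x:ℕ) ≠ (y:ℕ)+1 → (x:ℕ)+1 ≠ (y:ℕ) → g x = 0) :
    ∑ x, g x =
      (if h : (y:ℕ)+1 < n then g ⟨(y:ℕ)+1, h⟩ else 0) + g y +
      (if 0 < (y:ℕ) then g ⟨(y:ℕ)-1, Nat.lt_of_le_of_lt (Nat.sub_le _ _) y.isLt⟩ else 0) := by
  have key : ∀ x : Fin n, g x =
      (if (x:ℕ) = (y:ℕ)+1 then g x else 0) + (if (x:ℕ) = (y:ℕ) then g x else 0)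
      + (if (x:ℕ) = (y:ℕ)-1 ∧ 0 < (y:ℕ) then g x else 0) := by
    intro x
    by_cases h1 : (x:ℕ) = (y:ℕ)+1
    · rw [if_pos h1, if_neg (by omega), if_neg (by omega)]; ring
    · by_cases h2 : (x:ℕ) = (y:ℕ)
      · rw [if_neg h1, if_pos h2, if_neg (by omega)]; ring
      · by_cases h3 : (x:ℕ) = (y:ℕ)-1 ∧ 0 < (y:ℕ)
        · rw [if_neg h1, if_neg h2, if_pos h3]; ring
        · rw [if_neg h1, if_neg h2, if_neg h3, h0 x h2 h1 (by omega)]; ring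
  rw [Finset.sum_congr rfl (fun x _ => key x), Finset.sum_add_distrib, Finset.sum_add_distrib,
    fin_sum_ite, fin_sum_ite]
  by_cases hy : 0 < (y:ℕ)
  · have : (∑ x : Fin n, if (x:ℕ) = (y:ℕ)-1 ∧ 0 < (y:ℕ) then g x else 0)
        = ∑ x : Fin n, if (x:ℕ) = (y:ℕ)-1 then g x else 0 :=
      Finset.sum_congr rfl (fun x _ => by simp [hy])
    rw [this, fin_sum_ite, if_pos hy,
      dif_pos (show (y:ℕ)-1 < n from Nat.lt_of_le_of_lt (Nat.sub_le _ _) y.isLt),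
      dif_pos (show (y:ℕ) < n from y.isLt)]
  · have : (∑ x : Fin n, if (x:ℕ) = (y:ℕ)-1 ∧ 0 < (y:ℕ) then g x else 0) = 0 :=
      Finset.sum_eq_zero (fun x _ => by simp [hy])
    rw [this, if_neg hy, dif_pos (show (y:ℕ) < n from y.isLt)]

lemma closedP_stepR {n₀ n₁ : ℕ} (r : ℝ) (x y : Fin (n₀+n₁)) (h : (y:ℕ) = (x:ℕ)+1) :
    closedP n₀ n₁ r x y = (1 - rFun n₀ r x) / 2 := by
  unfold closedP; rw [if_pos h]

lemma closedP_stepL {n₀ n₁ : ℕ} (r : ℝ) (x y : Fin (n₀+n₁)) (h : (y:ℕ)+1 = (x:ℕ)) :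
    closedP n₀ n₁ r x y = (1 - rFun n₀ r x) / 2 := by
  unfold closedP; rw [if_neg (by omega), if_pos h]

lemma closedP_diag0 {n₀ n₁ : ℕ} (r : ℝ) (x : Fin (n₀+n₁)) (h : (x:ℕ) = 0) :
    closedP n₀ n₁ r x x = 1/2 := by
  unfold closedP; rw [if_neg (by omega), if_neg (by omega), if_pos rfl, if_pos h]

lemma closedP_diagI {n₀ n₁ : ℕ} (r : ℝ) (x : Fin (n₀+n₁)) (h : 0 < (x:ℕ))
    (h' : (x:ℕ) < n₀+n₁-1) :
    closedP n₀ n₁ r x x = rFun n₀ r x := by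
  unfold closedP
  rw [if_neg (by omega), if_neg (by omega), if_pos rfl, if_neg (by omega), if_neg (by omega)]

lemma closedP_zero {n₀ n₁ : ℕ} (r : ℝ) (x y : Fin (n₀+n₁)) (h1 : (x:ℕ) ≠ (y:ℕ))
    (h2 : (x:ℕ) ≠ (y:ℕ)+1) (h3 : (x:ℕ)+1 ≠ (y:ℕ)) :
    closedP n₀ n₁ r x y = 0 := by
  unfold closedP
  rw [if_neg (by omega), if_neg (by omega), if_neg (fun hh => h1 (by rw [hh]))]



/-- The flux function `F(k) = μ(k)(1 - r(k))`, extended by `0` outside range. -/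
noncomputable def Ff (n₀ n₁ : ℕ) (r : ℝ) (μ : Fin (n₀+n₁) → ℝ) (k : ℕ) : ℝ :=
  if h : k < n₀+n₁ then μ ⟨k, h⟩ * (1 - rFun n₀ r k) else 0

lemma Ff_eq {n₀ n₁ : ℕ} (r : ℝ) (μ : Fin (n₀+n₁) → ℝ) {k : ℕ} (h : k < n₀+n₁) :
    Ff n₀ n₁ r μ k = μ ⟨k, h⟩ * (1 - rFun n₀ r k) := dif_pos h

/-- the closed-pore random walk admits a unique stationary distribution:
any probability vector `μ` with `μP = μ` equals `π`. -/
theorem stmt9 (n₀ n₁ : ℕ) (h₀ : 1 ≤ n₀) (h₁ : 1 ≤ n₁) (r : ℝ)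
    (hr : r ∈ Set.Ico (0 : ℝ) 1)
    (μ : Fin (n₀ + n₁) → ℝ)
    (hμnonneg : ∀ x, 0 ≤ μ x)
    (hμsum : ∑ x, μ x = 1)
    (hμstat : Matrix.vecMul μ (closedP n₀ n₁ r) = μ) :
    μ = statPi n₀ n₁ r := by
  obtain ⟨hr0, hr1⟩ := hr
  have hn : 2 ≤ n₀ + n₁ := by omega
  -- stationarity equations
  have stat : ∀ y : Fin (n₀+n₁), ∑ x, μ x * closedP n₀ n₁ r x y = μ y := by
    intro y
    have := congrFun hμstat y
    simpa [Matrix.vecMul, dotProduct] using this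
  have triEq : ∀ y : Fin (n₀+n₁),
      (if h : (y:ℕ)+1 < n₀+n₁ then μ ⟨(y:ℕ)+1, h⟩ * closedP n₀ n₁ r ⟨(y:ℕ)+1, h⟩ y else 0)
      + μ y * closedP n₀ n₁ r y y
      + (if 0 < (y:ℕ) then
          μ ⟨(y:ℕ)-1, Nat.lt_of_le_of_lt (Nat.sub_le _ _) y.isLt⟩ *
            closedP n₀ n₁ r ⟨(y:ℕ)-1, Nat.lt_of_le_of_lt (Nat.sub_le _ _) y.isLt⟩ y
        else 0) = μ y := by
    intro y
    have t := tri_sum (fun x => μ x * closedP n₀ n₁ r x y) y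
      (fun x h1 h2 h3 => by
        show μ x * closedP n₀ n₁ r x y = 0
        rw [closedP_zero r x y h1 h2 h3, mul_zero])
    rw [stat y] at t
    exact t.symm
  -- base equation at y = 0
  have step0 : Ff n₀ n₁ r μ 1 = Ff n₀ n₁ r μ 0 := by
    have h1n : (1:ℕ) < n₀+n₁ := by omega
    have h0n : (0:ℕ) < n₀+n₁ := by omega
    have e := triEq ⟨0, h0n⟩
    rw [dif_pos (show ((⟨0,h0n⟩ : Fin (n₀+n₁)) : ℕ) + 1 < n₀+n₁ from h1n)] at e
    rw [closedP_stepL r _ _ (by simp), closedP_diag0 r _ (by simp), if_neg (by simp)] at e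
    have hr00 : rFun n₀ r 0 = 0 := by unfold rFun; rw [if_pos (by omega)]
    rw [Ff_eq r μ h1n, Ff_eq r μ h0n]
    simp only [Fin.val_mk] at e ⊢
    rw [hr00]
    linarith [e]
  -- interior equations
  have stepk : ∀ m : ℕ, m + 2 < n₀+n₁ →
      Ff n₀ n₁ r μ (m+2) + Ff n₀ n₁ r μ m = 2 * Ff n₀ n₁ r μ (m+1) := by
    intro m hm
    have hy : m + 1 < n₀+n₁ := by omega
    have e := triEq ⟨m+1, hy⟩
    rw [dif_pos (show ((⟨m+1,hy⟩ : Fin (n₀+n₁)) : ℕ) + 1 < n₀+n₁ from hm)] at e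
    rw [closedP_stepL r _ _ (by simp), closedP_diagI r _ (by simp) (by simp; omega),
      if_pos (by simp)] at e
    rw [closedP_stepR r _ _ (by simp)] at e
    rw [Ff_eq r μ hm, Ff_eq r μ (show m < n₀+n₁ by omega), Ff_eq r μ hy]
    simp only [Fin.val_mk, Nat.add_sub_cancel] at e ⊢
    linarith [e]
  -- F is constant
  have const : ∀ k, k < n₀+n₁ → Ff n₀ n₁ r μ k = Ff n₀ n₁ r μ 0 := by
    intro k
    induction k using Nat.strong_induction_on with
    | _ k ih =>
      intro hk
      match k with
      | 0 => rfl
      | 1 => exact step0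
      | (m+2) =>
        have ha := ih (m+1) (by omega) (by omega)
        have hb := ih m (by omega) (by omega)
        have hc := stepk m hk
        linarith
  -- identify μ
  have h1r : (0:ℝ) < 1 - r := by linarith
  have hFx : ∀ x : Fin (n₀+n₁), μ x * (1 - rFun n₀ r (x:ℕ)) = Ff n₀ n₁ r μ 0 := by
    intro x
    have h := const (x:ℕ) x.isLt
    rw [Ff_eq r μ x.isLt] at h
    simpa using h
  set c : ℝ := Ff n₀ n₁ r μ 0 with hc
  have μval : ∀ x : Fin (n₀+n₁), μ x = if (x:ℕ) < n₀ then c else c / (1 - r) := by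
    intro x
    by_cases hx : (x:ℕ) < n₀
    · have h := hFx x
      rw [show rFun n₀ r (x:ℕ) = 0 from by unfold rFun; rw [if_pos hx]] at h
      rw [if_pos hx]; linarith
    · have h := hFx x
      rw [show rFun n₀ r (x:ℕ) = r from by unfold rFun; rw [if_neg hx]] at h
      rw [if_neg hx, eq_div_iff (by linarith : (1:ℝ) - r ≠ 0)]
      exact h
  -- compute the normalization
  have hsum2 : (n₀ : ℝ) * c + (n₁ : ℝ) * (c / (1 - r)) = 1 := by
    have e1 : ∑ x : Fin (n₀+n₁), μ x
        = ∑ i ∈ Finset.range (n₀+n₁), (if i < n₀ then c else c / (1-r)) := by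
      rw [Finset.sum_congr rfl (fun x _ => μval x)]
      exact Fin.sum_univ_eq_sum_range (fun i => if i < n₀ then c else c / (1-r)) (n₀+n₁)
    rw [Finset.range_eq_Ico,
      ← Finset.sum_Ico_consecutive _ (Nat.zero_le n₀) (by omega : n₀ ≤ n₀+n₁)] at e1
    have e2 : (∑ i ∈ Finset.Ico 0 n₀, (if i < n₀ then c else c/(1-r))) = (n₀:ℝ) * c := by
      rw [show (∑ i ∈ Finset.Ico 0 n₀, (if i < n₀ then c else c/(1-r)))
            = ∑ _i ∈ Finset.Ico 0 n₀, c from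
          Finset.sum_congr rfl (fun i hi => if_pos (Finset.mem_Ico.mp hi).2),
        Finset.sum_const, Nat.card_Ico, Nat.sub_zero, nsmul_eq_mul]
    have e3 : (∑ i ∈ Finset.Ico n₀ (n₀+n₁), (if i < n₀ then c else c/(1-r)))
        = (n₁:ℝ) * (c / (1-r)) := by
      rw [show (∑ i ∈ Finset.Ico n₀ (n₀+n₁), (if i < n₀ then c else c/(1-r)))
            = ∑ _i ∈ Finset.Ico n₀ (n₀+n₁), c/(1-r) from
          Finset.sum_congr rfl (fun i hi =>
            if_neg (by have := (Finset.mem_Ico.mp hi).1; omega)),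
        Finset.sum_const, Nat.card_Ico, (show n₀ + n₁ - n₀ = n₁ by omega), nsmul_eq_mul]
    rw [e2, e3, hμsum] at e1
    linarith [e1]
  have hZ : (0:ℝ) < (1 - r) * n₀ + n₁ := by
    have h1 : (0:ℝ) ≤ (1-r) * n₀ := by positivity
    have h2 : (1:ℝ) ≤ (n₁:ℝ) := by exact_mod_cast h₁
    linarith
  have hcval : c = (1 - r) / ((1 - r) * n₀ + n₁) := by
    rw [eq_div_iff (ne_of_gt hZ)]
    have h2 : (n₁:ℝ) * (c / (1-r)) * (1-r) = (n₁:ℝ) * c := by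
      field_simp
    nlinarith [hsum2]
  funext x
  rw [μval x]
  unfold statPi
  by_cases hx : (x:ℕ) < n₀
  · rw [if_pos hx, if_pos hx, hcval]
  · rw [if_neg hx, if_neg hx, hcval]
    rw [div_div, div_eq_div_iff (by positivity) (ne_of_gt hZ)]
    ring
end
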